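/- Fix a ∈ ℝ with a ≠ 0 and k ∈ ℕ, and define f : ℝ → ℂ by f(x) = h_k(x + ia), using the entire extension of the Hermite function h_k. Then f is twice differentiable and for every x ∈ ℝ, -f''(x) + (x² + 2iax)·f(x) = (1 + 2k + a²)·f(x). -/

import Mathlib

open MeasureTheory

/-- The physicists' Hermite polynomial `H_k`, extended to an entire function on `ℂ`:
`H_k(z) = (-1)^k e^{z²} (d/dz)^k e^{-z²}`. -/
noncomputable def physHermiteC (k : ℕ) (z : ℂ) : ℂ :=
  (-1) ^ k * Complex.exp (z ^ 2) * iteratedDeriv k (fun w : ℂ => Complex.exp (-w ^ 2)) z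

/-- The Hermite function `h_k(z) = (2^k k! √π)^{-1/2} H_k(z) e^{-z²/2}`, as an entire
function on `ℂ`. -/
noncomputable def hermiteFunC (k : ℕ) (z : ℂ) : ℂ :=
  ((Real.sqrt (2 ^ k * Nat.factorial k * Real.sqrt Real.pi) : ℝ) : ℂ)⁻¹ *
    physHermiteC k z * Complex.exp (-z ^ 2 / 2)
/-!
Write `G(z) = e^{-z²}`. Up to a constant factor, `h_k(z) = e^{z²/2} G⁽ᵏ⁾(z)`, and differentiating
`G' = -2zG` gives `G⁽ⁿ⁺²⁾ = -2z G⁽ⁿ⁺¹⁾ - 2(n+1) G⁽ⁿ⁾`. With this recurrence, two differentiations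
show that `φ = e^{z²/2} G⁽ⁿ⁾` solves `φ'' = (z² - (2n+1)) φ` on all of `ℂ`. Restricting to the
line `z = x + ia`, where `z² = x² + 2iax - a²`, gives the equation.
-/

open Complex

noncomputable def iterDerivGauss (n : ℕ) : ℂ → ℂ :=
  iteratedDeriv n fun w : ℂ => cexp (-w ^ 2)

lemma hasDerivAt_iterDerivGauss (n : ℕ) (z : ℂ) :
    HasDerivAt (iterDerivGauss n) (iterDerivGauss (n + 1) z) z := by
  have hsmooth : ContDiff ℂ ⊤ (fun w : ℂ => cexp (-w ^ 2)) := by fun_prop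
  unfold iterDerivGauss
  rw [iteratedDeriv_succ]
  exact (hsmooth.differentiable_iteratedDeriv n (WithTop.coe_lt_top _) z).hasDerivAt

lemma iterDerivGauss_one (z : ℂ) : iterDerivGauss 1 z = -2 * z * iterDerivGauss 0 z := by
  have h : HasDerivAt (fun w : ℂ => cexp (-w ^ 2)) (cexp (-z ^ 2) * (-(2 * z))) z := by
    simpa using ((hasDerivAt_pow 2 z).neg).cexp
  simp only [iterDerivGauss, iteratedDeriv_one, iteratedDeriv_zero, h.deriv]
  ring

lemma iterDerivGauss_add_two (n : ℕ) (z : ℂ) :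
    iterDerivGauss (n + 2) z =
      -2 * z * iterDerivGauss (n + 1) z - 2 * (n + 1) * iterDerivGauss n z := by
  induction n generalizing z with
  | zero =>
    have h := ((hasDerivAt_id' z).const_mul (-2 : ℂ)).fun_mul (hasDerivAt_iterDerivGauss 0 z)
    have h2 := (hasDerivAt_iterDerivGauss 1 z).unique
      (h.congr_of_eventuallyEq (.of_forall iterDerivGauss_one))
    linear_combination h2
  | succ n ih =>
    have h := (((hasDerivAt_id' z).const_mul (-2 : ℂ)).fun_mul
      (hasDerivAt_iterDerivGauss (n + 1) z)).fun_sub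
      ((hasDerivAt_iterDerivGauss n z).const_mul (2 * ((n : ℂ) + 1)))
    have h2 := (hasDerivAt_iterDerivGauss (n + 2) z).unique
      (h.congr_of_eventuallyEq (.of_forall ih))
    push_cast at h2 ⊢
    linear_combination h2

lemma HasDerivAt.cexp_sq_div_two_mul {u : ℂ → ℂ} {u' z : ℂ} (hu : HasDerivAt u u' z) :
    HasDerivAt (fun w => cexp (w ^ 2 / 2) * u w) (cexp (z ^ 2 / 2) * (z * u z + u')) z := by
  have hexp : HasDerivAt (fun w : ℂ => cexp (w ^ 2 / 2)) (cexp (z ^ 2 / 2) * z) z := by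
    simpa using ((hasDerivAt_pow 2 z).div_const 2).cexp
  exact (hexp.fun_mul hu).congr_deriv (by ring)

lemma hasDerivAt_cexp_sq_div_two_mul_iterDerivGauss (n : ℕ) (z : ℂ) :
    HasDerivAt (fun w => cexp (w ^ 2 / 2) * iterDerivGauss n w)
      (cexp (z ^ 2 / 2) * (z * iterDerivGauss n z + iterDerivGauss (n + 1) z)) z :=
  (hasDerivAt_iterDerivGauss n z).cexp_sq_div_two_mul

/-- The function differentiated here is `φ'` for `φ = e^{w²/2} G⁽ⁿ⁾`, so this is the Weber
equation `φ'' = (z² - (2n+1)) φ`. -/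
lemma hasDerivAt_cexp_sq_div_two_mul_iterDerivGauss_deriv (n : ℕ) (z : ℂ) :
    HasDerivAt (fun w => cexp (w ^ 2 / 2) * (w * iterDerivGauss n w + iterDerivGauss (n + 1) w))
      ((z ^ 2 - (2 * n + 1)) * (cexp (z ^ 2 / 2) * iterDerivGauss n z)) z := by
  refine (((hasDerivAt_id' z).fun_mul (hasDerivAt_iterDerivGauss n z)).fun_add
    (hasDerivAt_iterDerivGauss (n + 1) z)).cexp_sq_div_two_mul.congr_deriv ?_
  rw [iterDerivGauss_add_two]
  ring

lemma hermiteFunC_eq_const_mul (k : ℕ) :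
    ∃ c : ℂ, hermiteFunC k = fun z => c * (cexp (z ^ 2 / 2) * iterDerivGauss k z) := by
  refine ⟨((Real.sqrt (2 ^ k * Nat.factorial k * Real.sqrt Real.pi) : ℝ) : ℂ)⁻¹ * (-1) ^ k,
    funext fun z => ?_⟩
  have hexp : cexp (z ^ 2) * cexp (-z ^ 2 / 2) = cexp (z ^ 2 / 2) := by
    rw [← Complex.exp_add]
    congr 1
    ring
  simp only [hermiteFunC, physHermiteC, iterDerivGauss, ← hexp]
  ring

theorem stmt_2_general (a : ℝ) (k : ℕ) :
    Differentiable ℝ (fun x : ℝ => hermiteFunC k ((x : ℂ) + a * Complex.I)) ∧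
    Differentiable ℝ (deriv (fun x : ℝ => hermiteFunC k ((x : ℂ) + a * Complex.I))) ∧
    ∀ x : ℝ,
      -(deriv (deriv (fun y : ℝ => hermiteFunC k ((y : ℂ) + a * Complex.I))) x)
          + ((x : ℂ) ^ 2 + 2 * (a : ℂ) * Complex.I * (x : ℂ)) *
              hermiteFunC k ((x : ℂ) + a * Complex.I)
        = (1 + 2 * (k : ℂ) + (a : ℂ) ^ 2) * hermiteFunC k ((x : ℂ) + a * Complex.I) := by
  obtain ⟨c, hc⟩ := hermiteFunC_eq_const_mul k
  have hf (x : ℝ) := (((hasDerivAt_cexp_sq_div_two_mul_iterDerivGauss k _).const_mul c)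
    |>.comp_add_const (x : ℂ) (a * I)).comp_ofReal
  have hf' (x : ℝ) := (((hasDerivAt_cexp_sq_div_two_mul_iterDerivGauss_deriv k _).const_mul c)
    |>.comp_add_const (x : ℂ) (a * I)).comp_ofReal
  simp only [hc]
  have hd := funext fun x => (hf x).deriv
  refine ⟨fun x => (hf x).differentiableAt, ?_, fun x => ?_⟩
  · rw [hd]
    exact fun x => (hf' x).differentiableAt
  · rw [hd, (hf' x).deriv]
    linear_combination (-(a : ℂ) ^ 2 * c * (cexp (((x : ℂ) + a * I) ^ 2 / 2) *
      iterDerivGauss k ((x : ℂ) + a * I))) * I_sq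

/-- For `a ∈ ℝ \ {0}` and `k ∈ ℕ`, the function `f(x) = h_k(x + ia)` is twice
differentiable and satisfies `-f'' + (x² + 2iax) f = (1 + 2k + a²) f`. -/
theorem stmt_2 (a : ℝ) (ha : a ≠ 0) (k : ℕ) :
    Differentiable ℝ (fun x : ℝ => hermiteFunC k ((x : ℂ) + a * Complex.I)) ∧
    Differentiable ℝ (deriv (fun x : ℝ => hermiteFunC k ((x : ℂ) + a * Complex.I))) ∧
    ∀ x : ℝ,
      -(deriv (deriv (fun y : ℝ => hermiteFunC k ((y : ℂ) + a * Complex.I))) x)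
          + ((x : ℂ) ^ 2 + 2 * (a : ℂ) * Complex.I * (x : ℂ)) *
              hermiteFunC k ((x : ℂ) + a * Complex.I)
        = (1 + 2 * (k : ℂ) + (a : ℂ) ^ 2) * hermiteFunC k ((x : ℂ) + a * Complex.I) :=
  stmt_2_general a k
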